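/- arXiv:0705.3599 — 3 statements merged into one kernel-verified Lean document; each statement's English description precedes it below -/
import Mathlib

section
/- Let A be a cyclotomic signed graph. Then A does not contain a tetrahedron as an induced subgraph: there do not exist four distinct vertices v, w, x, z that are pairwise adjacent (all six of A v w, A v x, A v z, A w x, A w z, A x z nonzero). -/
/-!
Since the eigenvalues of a cyclotomic matrix `A` lie in `[-2, 2]`, `4 - A²` is positive
semidefinite, i.e. `‖A u‖² ≤ 4 ‖u‖²` for every vector `u`. Given a tetrahedron `v, w, x, z`, take
`u = A v w • e_w + A v x • e_x + A v z • e_z`, so `‖u‖² = 3` and `(A u)_v = 3`. The coordinates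
`(A u)_w, (A u)_x, (A u)_z` have squares `2 + 2σ`, where `σ = ±1` runs over the signs of the three
4-cycles of the tetrahedron. Every edge lies on exactly two of these 4-cycles, so their signs
multiply to `1` and cannot all be `-1`; hence `‖A u‖² ≥ 9 + 4 > 12`.
-/

open Matrix

/-- An integer symmetric matrix is cyclotomic if all its real eigenvalues lie in `[-2,2]`. -/
def IsCyclo {n : ℕ} (A : Matrix (Fin n) (Fin n) ℤ) : Prop :=
  ∀ μ ∈ spectrum ℝ (A.map ((↑) : ℤ → ℝ)), |μ| ≤ 2

theorem Matrix.IsHermitian.mulVec_dotProduct_self_le {ι : Type*} [Fintype ι] [DecidableEq ι]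
    {A : Matrix ι ι ℝ} (hA : A.IsHermitian) {c : ℝ} (hc : ∀ μ ∈ spectrum ℝ A, |μ| ≤ c)
    (u : ι → ℝ) : (A *ᵥ u) ⬝ᵥ (A *ᵥ u) ≤ c ^ 2 * (u ⬝ᵥ u) := by
  have hsa : IsSelfAdjoint A := hA
  have hpsd : (c ^ 2 • (1 : Matrix ι ι ℝ) - A * A).PosSemidef := by
    have hcfc : cfc (fun x : ℝ => c ^ 2 - x ^ 2) A = c ^ 2 • (1 : Matrix ι ι ℝ) - A * A := by
      rw [cfc_sub (fun _ => c ^ 2) (fun x => x ^ 2) A, cfc_const (c ^ 2) A, cfc_pow_id A 2,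
        pow_two A, Algebra.algebraMap_eq_smul_one]
    rw [← hcfc, posSemidef_iff_isHermitian_and_spectrum_nonneg]
    refine ⟨cfc_predicate (p := IsSelfAdjoint) _ A, ?_⟩
    rw [cfc_map_spectrum (fun x : ℝ => c ^ 2 - x ^ 2) A]
    rintro _ ⟨μ, hμ, rfl⟩
    have hμc := abs_le.mp (hc μ hμ)
    exact sub_nonneg.mpr (sq_le_sq' hμc.1 hμc.2)
  have hquad : u ⬝ᵥ ((c ^ 2 • (1 : Matrix ι ι ℝ) - A * A) *ᵥ u)
      = c ^ 2 * (u ⬝ᵥ u) - (A *ᵥ u) ⬝ᵥ (A *ᵥ u) := by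
    rw [sub_mulVec, smul_mulVec, one_mulVec, dotProduct_sub, dotProduct_smul, smul_eq_mul,
      ← mulVec_mulVec, dotProduct_mulVec, ← mulVec_transpose,
      ← conjTranspose_eq_transpose_of_trivial, hA.eq]
  simpa [hquad] using hpsd.re_dotProduct_nonneg u

theorem sum_sq_le_dotProduct_self {ι R : Type*} [Fintype ι] [Ring R] [LinearOrder R]
    [IsOrderedRing R] (s : Finset ι) (f : ι → R) : ∑ i ∈ s, f i ^ 2 ≤ f ⬝ᵥ f := by
  simpa only [dotProduct, sq] using Finset.sum_le_univ_sum_of_nonneg fun i => sq_nonneg (f i)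

theorem IsCyclo.mulVec_dotProduct_self_le {n : ℕ} {A : Matrix (Fin n) (Fin n) ℤ}
    (hcyc : IsCyclo A) (hsymm : A.IsSymm) (u : Fin n → ℤ) :
    (A *ᵥ u) ⬝ᵥ (A *ᵥ u) ≤ 4 * (u ⬝ᵥ u) := by
  have hA : (A.map ((↑) : ℤ → ℝ)).IsHermitian := by
    rw [IsHermitian, conjTranspose_eq_transpose_of_trivial, ← transpose_map, hsymm]
  have hcast : ∀ v w : Fin n → ℤ, ((v ⬝ᵥ w : ℤ) : ℝ) = ((↑) ∘ v) ⬝ᵥ ((↑) ∘ w) :=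
    (Int.castRingHom ℝ).map_dotProduct
  have hmulVec : ((↑) ∘ (A *ᵥ u) : Fin n → ℝ) = A.map (↑) *ᵥ ((↑) ∘ u) :=
    funext ((Int.castRingHom ℝ).map_mulVec A u)
  have hbound := hA.mulVec_dotProduct_self_le hcyc ((↑) ∘ u)
  rw [← hmulVec, ← hcast, ← hcast] at hbound
  norm_num at hbound
  exact_mod_cast hbound

theorem neg_one_le_add_add_of_sq_eq_one {p q r : ℤ} (hp : p ^ 2 = 1) (hq : q ^ 2 = 1)
    (hr : r ^ 2 = 1) (hpqr : p * q * r = 1) : -1 ≤ p + q + r := by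
  rcases sq_eq_one_iff.mp hp with rfl | rfl <;> rcases sq_eq_one_iff.mp hq with rfl | rfl <;>
    rcases sq_eq_one_iff.mp hr with rfl | rfl <;> omega

theorem four_le_sum_sq_of_sq_eq_one {a b c d e f : ℤ} (ha : a ^ 2 = 1) (hb : b ^ 2 = 1)
    (hc : c ^ 2 = 1) (hd : d ^ 2 = 1) (he : e ^ 2 = 1) (hf : f ^ 2 = 1) :
    4 ≤ (d * b + e * c) ^ 2 + (d * a + f * c) ^ 2 + (e * a + f * b) ^ 2 := by
  have hsq : ∀ {p q : ℤ}, p ^ 2 = 1 → q ^ 2 = 1 → (p * q) ^ 2 = 1 := fun hp hq => by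
    rw [mul_pow, hp, hq, one_mul]
  have hpath : ∀ {p q r s : ℤ}, p ^ 2 = 1 → q ^ 2 = 1 → r ^ 2 = 1 → s ^ 2 = 1 →
      (p * q + r * s) ^ 2 = 2 + 2 * (p * q * (r * s)) := fun hp hq hr hs => by
    linear_combination hsq hp hq + hsq hr hs
  have hcycles : d * b * (e * c) * (d * a * (f * c)) * (e * a * (f * b)) = 1 := by
    linear_combination hsq (hsq (hsq ha hb) (hsq hc hd)) (hsq he hf)
  have hσ := neg_one_le_add_add_of_sq_eq_one (hsq (hsq hd hb) (hsq he hc))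
    (hsq (hsq hd ha) (hsq hf hc)) (hsq (hsq he ha) (hsq hf hb)) hcycles
  rw [hpath hd hb he hc, hpath hd ha hf hc, hpath he ha hf hb]
  linarith

/-- A cyclotomic signed graph contains no tetrahedron: no four
distinct vertices are pairwise adjacent. -/
theorem no_tetrahedron
    {n : ℕ} (A : Matrix (Fin n) (Fin n) ℤ) (hsymm : A.IsSymm)
    (hdiag : ∀ i, A i i = 0)
    (hent : ∀ i j, A i j = -1 ∨ A i j = 0 ∨ A i j = 1)
    (hcyc : IsCyclo A) :
    ¬ ∃ v w x z : Fin n,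
        v ≠ w ∧ v ≠ x ∧ v ≠ z ∧ w ≠ x ∧ w ≠ z ∧ x ≠ z ∧
        A v w ≠ 0 ∧ A v x ≠ 0 ∧ A v z ≠ 0 ∧
        A w x ≠ 0 ∧ A w z ≠ 0 ∧ A x z ≠ 0 := by
  rintro ⟨v, w, x, z, hvw, hvx, hvz, hwx, hwz, hxz, avw, avx, avz, awx, awz, axz⟩
  have hsign : ∀ {i j}, A i j ≠ 0 → A i j ^ 2 = 1 := fun {i j} hij => by
    rcases hent i j with h | h | h <;> simp_all
  set u : Fin n → ℤ := Pi.single w (A v w) + Pi.single x (A v x) + Pi.single z (A v z)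
  have hAu : ∀ i, (A *ᵥ u) i = A v w * A i w + A v x * A i x + A v z * A i z := fun i => by
    simp [u, mulVec_add]
  have huu : u ⬝ᵥ u = A v w ^ 2 + A v x ^ 2 + A v z ^ 2 := by
    simp [u, dotProduct_add, hwx, hwz, hxz, hwx.symm, hwz.symm, hxz.symm, sq]
  have hcoords := sum_sq_le_dotProduct_self {v, w, x, z} (A *ᵥ u)
  rw [Finset.sum_insert (by simp [hvw, hvx, hvz]), Finset.sum_insert (by simp [hwx, hwz]),
    Finset.sum_pair hxz] at hcoords
  simp only [hAu, hdiag, hsymm.apply w x, hsymm.apply w z, hsymm.apply x z, ← sq, hsign avw,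
    hsign avx, hsign avz] at hcoords
  have hbound := hcyc.mulVec_dotProduct_self_le hsymm u
  have h4 := four_le_sum_sq_of_sq_eq_one (hsign avw) (hsign avx) (hsign avz) (hsign awx)
    (hsign awz) (hsign axz)
  rw [huu, hsign avw, hsign avx, hsign avz] at hbound
  linarith
end

section
/- Let n ≥ 2 and let S be a maximal triangle-free subgraph of 𝒟_n. Then every vertex of S has at most 4 neighbours in S. Moreover, if a vertex v ∈ S has two distinct neighbours a, b ∈ S with a ≠ b*, then v has exactly four neighbours in S, namely a, b, a*, b*. -/
/-!
Write each vertex as `e_i ± e_j`. Two vertices are adjacent exactly when their supports share one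
index, and two orthogonal vertices whose supports meet are conjugate. In a triangle-free `S` the
neighbours of `v` are pairwise orthogonal, so those meeting a fixed index of `supp v = {i, j}` are
pairwise conjugate: at most two for each of the two indices. Since `a` and `a*` have the same
neighbours, a maximal `S` is closed under conjugation. If `a, b` are neighbours of `v` with
`b ≠ a*`, they are orthogonal with disjoint supports, so they meet `supp v` in different indices;
every other neighbour meets `a` or `b`, hence is `a*` or `b*`.
-/

/-- The `i`th standard basis vector of `ℤⁿ`. -/
def stdVec (n : ℕ) (i : Fin n) : Fin n → ℤ := Pi.single i 1

/-- Integer dot product. -/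
def dotZ {n : ℕ} (u v : Fin n → ℤ) : ℤ := ∑ k, u k * v k

/-- Vertices of the signed graph `𝒟_n`: vectors `e_i ± e_j` for `i < j`. -/
def DnVertex {n : ℕ} (v : Fin n → ℤ) : Prop :=
  ∃ i j : Fin n, i < j ∧
    (v = stdVec n i + stdVec n j ∨ v = stdVec n i - stdVec n j)

/-- Adjacency in `𝒟_n`: distinct vectors with nonzero inner product. -/
def DnAdj {n : ℕ} (u v : Fin n → ℤ) : Prop := u ≠ v ∧ dotZ u v ≠ 0

/-- A set of vertices is triangle-free if it contains no three pairwise adjacent vertices. -/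
def TriangleFree {n : ℕ} (S : Set (Fin n → ℤ)) : Prop :=
  ¬ ∃ a b c, a ∈ S ∧ b ∈ S ∧ c ∈ S ∧ DnAdj a b ∧ DnAdj a c ∧ DnAdj b c

/-- `S` is a maximal triangle-free subgraph of `𝒟_n`: a triangle-free set of vertices of
`𝒟_n` such that adjoining any further vertex of `𝒟_n` creates a triangle. -/
def MaximalTriangleFree {n : ℕ} (S : Set (Fin n → ℤ)) : Prop :=
  (∀ v ∈ S, DnVertex v) ∧ TriangleFree S ∧
    ∀ v, DnVertex v → v ∉ S → ¬ TriangleFree (insert v S)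

/-- `b` is the conjugate `a*` of `a`: one of them is `e_i + e_j` and the other
`e_i − e_j` (with `i < j`). -/
def DnConj {n : ℕ} (a b : Fin n → ℤ) : Prop :=
  ∃ i j : Fin n, i < j ∧
    ((a = stdVec n i + stdVec n j ∧ b = stdVec n i - stdVec n j) ∨
     (a = stdVec n i - stdVec n j ∧ b = stdVec n i + stdVec n j))

open Matrix Function

def rootVec (n : ℕ) (i j : Fin n) (ε : ℤ) : Fin n → ℤ := Pi.single i 1 + Pi.single j ε

section Coordinates

variable {n : ℕ}

lemma dotZ_eq_dotProduct (u v : Fin n → ℤ) : dotZ u v = u ⬝ᵥ v := rfl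

lemma rootVec_apply (i j k : Fin n) (ε : ℤ) :
    rootVec n i j ε k = (if k = i then 1 else 0) + (if k = j then ε else 0) := by
  simp [rootVec, Pi.single_apply]

lemma dotZ_rootVec (i j : Fin n) (ε : ℤ) (w : Fin n → ℤ) :
    dotZ (rootVec n i j ε) w = w i + ε * w j := by
  rw [dotZ_eq_dotProduct, rootVec, add_dotProduct, single_dotProduct, single_dotProduct, one_mul]

lemma rootVec_neg_one (i j : Fin n) : rootVec n i j (-1) = stdVec n i - stdVec n j := by
  simp [rootVec, stdVec, sub_eq_add_neg, Pi.single_neg]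

lemma eq_of_rootVec_eq {i j p q : Fin n} {ε δ : ℤ} (hij : i < j) (hpq : p < q)
    (hε : ε = 1 ∨ ε = -1) (hδ : δ = 1 ∨ δ = -1) (h : rootVec n i j ε = rootVec n p q δ) :
    i = p ∧ j = q ∧ ε = δ := by
  have hi := congrFun h i
  have hj := congrFun h j
  simp only [rootVec_apply] at hi hj
  rcases hε with rfl | rfl <;> rcases hδ with rfl | rfl <;> split_ifs at hi hj <;> omega

lemma dnVertex_iff {v : Fin n → ℤ} :
    DnVertex v ↔ ∃ i j, i < j ∧ ∃ ε : ℤ, (ε = 1 ∨ ε = -1) ∧ v = rootVec n i j ε := by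
  constructor
  · rintro ⟨i, j, hij, rfl | rfl⟩
    · exact ⟨i, j, hij, 1, .inl rfl, rfl⟩
    · exact ⟨i, j, hij, -1, .inr rfl, (rootVec_neg_one i j).symm⟩
  · rintro ⟨i, j, hij, ε, rfl | rfl, rfl⟩
    · exact ⟨i, j, hij, .inl rfl⟩
    · exact ⟨i, j, hij, .inr (rootVec_neg_one i j)⟩

lemma dnConj_iff {a b : Fin n → ℤ} :
    DnConj a b ↔ ∃ i j, i < j ∧ ∃ ε : ℤ, (ε = 1 ∨ ε = -1) ∧
      a = rootVec n i j ε ∧ b = rootVec n i j (-ε) := by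
  constructor
  · rintro ⟨i, j, hij, ⟨rfl, rfl⟩ | ⟨rfl, rfl⟩⟩
    · exact ⟨i, j, hij, 1, .inl rfl, rfl, (rootVec_neg_one i j).symm⟩
    · exact ⟨i, j, hij, -1, .inr rfl, (rootVec_neg_one i j).symm, rfl⟩
  · rintro ⟨i, j, hij, ε, rfl | rfl, rfl, rfl⟩
    · exact ⟨i, j, hij, .inl ⟨rfl, rootVec_neg_one i j⟩⟩
    · exact ⟨i, j, hij, .inr ⟨rootVec_neg_one i j, rfl⟩⟩

end Coordinates

section Dn

variable {n : ℕ} {a a' b c u v w : Fin n → ℤ}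

lemma DnAdj.symm (h : DnAdj u v) : DnAdj v u :=
  ⟨h.1.symm, by rw [dotZ_eq_dotProduct, dotProduct_comm, ← dotZ_eq_dotProduct]; exact h.2⟩

lemma not_disjoint_support_of_dotZ_ne_zero (h : dotZ u v ≠ 0) :
    ¬Disjoint (support u) (support v) := by
  intro hdisj
  refine h (Finset.sum_eq_zero fun k _ => ?_)
  by_cases hk : u k = 0
  · rw [hk, zero_mul]
  · rw [Set.disjoint_left.1 hdisj (mem_support.2 hk) |> notMem_support.1, mul_zero]

lemma DnVertex.support_eq_pair (hv : DnVertex v) : ∃ i j, support v = {i, j} := by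
  obtain ⟨i, j, hij, ε, hε, rfl⟩ := dnVertex_iff.1 hv
  refine ⟨i, j, Set.ext fun k => ?_⟩
  simp only [mem_support, rootVec_apply, Set.mem_insert_iff, Set.mem_singleton_iff]
  rcases hε with rfl | rfl <;> split_ifs <;> omega

lemma DnVertex.exists_dnConj (ha : DnVertex a) : ∃ a', DnConj a a' := by
  obtain ⟨i, j, hij, ε, hε, rfl⟩ := dnVertex_iff.1 ha
  exact ⟨_, dnConj_iff.2 ⟨i, j, hij, ε, hε, rfl, rfl⟩⟩

lemma DnConj.symm (h : DnConj a b) : DnConj b a := by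
  obtain ⟨i, j, hij, h | h⟩ := h
  exacts [⟨i, j, hij, .inr h.symm⟩, ⟨i, j, hij, .inl h.symm⟩]

lemma DnConj.dnVertex_right (h : DnConj a b) : DnVertex b := by
  obtain ⟨i, j, hij, ε, hε, -, rfl⟩ := dnConj_iff.1 h
  exact dnVertex_iff.2 ⟨i, j, hij, -ε, by omega, rfl⟩

lemma DnConj.ne (h : DnConj a b) : a ≠ b := by
  obtain ⟨i, j, hij, ε, hε, rfl, rfl⟩ := dnConj_iff.1 h
  intro hab
  have := congrFun hab j
  simp only [rootVec_apply] at this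
  rcases hε with rfl | rfl <;> split_ifs at this <;> omega

lemma DnConj.unique (hb : DnConj a b) (hc : DnConj a c) : b = c := by
  obtain ⟨i, j, hij, ε, hε, rfl, rfl⟩ := dnConj_iff.1 hb
  obtain ⟨p, q, hpq, δ, hδ, ha, rfl⟩ := dnConj_iff.1 hc
  obtain ⟨rfl, rfl, rfl⟩ := eq_of_rootVec_eq hij hpq hε hδ ha
  rfl

lemma DnConj.dnAdj_of_dnAdj (h : DnConj a a') (hw : DnVertex w) (haw : DnAdj a w) :
    DnAdj a' w := by
  obtain ⟨i, j, hij, ε, hε, rfl, rfl⟩ := dnConj_iff.1 h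
  obtain ⟨p, q, hpq, δ, hδ, rfl⟩ := dnVertex_iff.1 hw
  obtain ⟨hne, h0⟩ := haw
  have hε' : -ε = 1 ∨ -ε = -1 := by omega
  rw [dotZ_rootVec, rootVec_apply, rootVec_apply] at h0
  refine ⟨fun heq => ?_, ?_⟩
  · obtain ⟨rfl, rfl, rfl⟩ := eq_of_rootVec_eq hij hpq hε' hδ heq
    rcases hε with rfl | rfl <;> split_ifs at h0 <;> omega
  · have hne' : ¬(i = p ∧ j = q ∧ ε = δ) := by rintro ⟨rfl, rfl, rfl⟩; exact hne rfl
    rw [dotZ_rootVec, rootVec_apply, rootVec_apply]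
    rcases hε with rfl | rfl <;> rcases hδ with rfl | rfl <;> split_ifs at h0 ⊢ <;> omega

lemma dnConj_of_dotZ_eq_zero (hu : DnVertex u) (hw : DnVertex w)
    (h0 : dotZ u w = 0) (hmeet : ¬Disjoint (support u) (support w)) : DnConj u w := by
  obtain ⟨i, j, hij, ε, hε, rfl⟩ := dnVertex_iff.1 hu
  obtain ⟨p, q, hpq, δ, hδ, rfl⟩ := dnVertex_iff.1 hw
  obtain ⟨k, hki, hkp⟩ := Set.not_disjoint_iff.1 hmeet
  rw [mem_support, rootVec_apply] at hki hkp
  rw [dotZ_rootVec, rootVec_apply, rootVec_apply] at h0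
  have : i = p ∧ j = q ∧ δ = -ε := by
    rcases hε with rfl | rfl <;> rcases hδ with rfl | rfl <;> split_ifs at h0 hki hkp <;> omega
  obtain ⟨rfl, rfl, rfl⟩ := this
  exact dnConj_iff.2 ⟨i, j, hij, ε, hε, rfl, rfl⟩

end Dn

lemma not_disjoint_or_of_not_disjoint_pair {α : Type*} {A B W : Set α} {i j : α}
    (hA : ¬Disjoint {i, j} A) (hB : ¬Disjoint {i, j} B) (hW : ¬Disjoint {i, j} W)
    (hAB : Disjoint A B) : ¬Disjoint A W ∨ ¬Disjoint B W := by
  obtain ⟨ka, hka, hkaA⟩ := Set.not_disjoint_iff.1 hA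
  obtain ⟨kb, hkb, hkbB⟩ := Set.not_disjoint_iff.1 hB
  obtain ⟨k, hk, hkW⟩ := Set.not_disjoint_iff.1 hW
  have hne : ka ≠ kb := fun h => Set.disjoint_left.1 hAB hkaA (h ▸ hkbB)
  simp only [Set.not_disjoint_iff]
  rcases hk with rfl | rfl <;> rcases hka with rfl | rfl <;> rcases hkb with rfl | rfl <;>
    first | exact .inl ⟨_, hkaA, hkW⟩ | exact .inr ⟨_, hkbB, hkW⟩ | exact absurd rfl hne

section TriangleFree

variable {n : ℕ} {S T : Set (Fin n → ℤ)} {a a' b b' u v w w' : Fin n → ℤ}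

lemma TriangleFree.dotZ_eq_zero (hS : TriangleFree S) (hv : v ∈ S) (hw : w ∈ S) (hw' : w' ∈ S)
    (hvw : DnAdj v w) (hvw' : DnAdj v w') (hne : w ≠ w') : dotZ w w' = 0 := by
  by_contra h
  exact hS ⟨v, w, w', hv, hw, hw', hvw, hvw', hne, h⟩

lemma TriangleFree.exists_triangle_of_not_triangleFree_insert (hS : TriangleFree S)
    (h : ¬TriangleFree (insert u S)) :
    ∃ x ∈ S, ∃ y ∈ S, DnAdj u x ∧ DnAdj u y ∧ DnAdj x y := by
  obtain ⟨x, y, z, hx, hy, hz, hxy, hxz, hyz⟩ := not_not.1 h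
  rcases hx with rfl | hx
  · exact ⟨y, hy.resolve_left hxy.1.symm, z, hz.resolve_left hxz.1.symm, hxy, hxz, hyz⟩
  rcases hy with rfl | hy
  · exact ⟨x, hx, z, hz.resolve_left hyz.1.symm, hxy.symm, hyz, hxz⟩
  rcases hz with rfl | hz
  · exact ⟨x, hx, y, hy, hxz.symm, hyz.symm, hxy⟩
  exact (hS ⟨x, y, z, hx, hy, hz, hxy, hxz, hyz⟩).elim

lemma MaximalTriangleFree.mem_of_dnConj (hS : MaximalTriangleFree S) (ha : a ∈ S)
    (h : DnConj a a') : a' ∈ S := by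
  by_contra ha'
  obtain ⟨x, hx, y, hy, hx', hy', hxy⟩ :=
    hS.2.1.exists_triangle_of_not_triangleFree_insert (hS.2.2 a' h.dnVertex_right ha')
  exact hS.2.1 ⟨a, x, y, ha, hx, hy, h.symm.dnAdj_of_dnAdj (hS.1 x hx) hx',
    h.symm.dnAdj_of_dnAdj (hS.1 y hy) hy', hxy⟩

lemma subset_pair_of_pairwise_dnConj (hT : ∀ a ∈ T, ∀ b ∈ T, a ≠ b → DnConj a b) :
    ∃ a b, T ⊆ {a, b} := by
  rcases T.eq_empty_or_nonempty with rfl | ⟨a, ha⟩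
  · exact ⟨0, 0, Set.empty_subset _⟩
  by_cases h : ∃ b ∈ T, b ≠ a
  · obtain ⟨b, hb, hba⟩ := h
    refine ⟨a, b, fun c hc => or_iff_not_imp_left.2 fun hca => ?_⟩
    exact (hT a ha c hc (Ne.symm hca)).unique (hT a ha b hb hba.symm)
  · exact ⟨a, a, fun c hc => .inl (not_not.1 fun hca => h ⟨c, hc, hca⟩)⟩

lemma ncard_neighbours_le_four (hV : ∀ v ∈ S, DnVertex v) (hS : TriangleFree S) (hv : v ∈ S) :
    Set.ncard {w ∈ S | DnAdj v w} ≤ 4 := by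
  obtain ⟨i, j, hsupp⟩ := (hV v hv).support_eq_pair
  have hpair : ∀ k, ∃ a b, {w ∈ S | DnAdj v w ∧ w k ≠ 0} ⊆ {a, b} := fun k =>
    subset_pair_of_pairwise_dnConj fun w ⟨hw, hvw, hwk⟩ w' ⟨hw', hvw', hw'k⟩ hne =>
      dnConj_of_dotZ_eq_zero (hV w hw) (hV w' hw') (hS.dotZ_eq_zero hv hw hw' hvw hvw' hne)
        (Set.not_disjoint_iff.2 ⟨k, hwk, hw'k⟩)
  obtain ⟨a, b, hab⟩ := hpair i
  obtain ⟨c, d, hcd⟩ := hpair j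
  have hsub : {w ∈ S | DnAdj v w} ⊆ {a, b, c, d} := by
    rintro w ⟨hw, hvw⟩
    obtain ⟨k, hkv, hkw⟩ := Set.not_disjoint_iff.1 (not_disjoint_support_of_dotZ_ne_zero hvw.2)
    rw [hsupp] at hkv
    rcases hkv with rfl | rfl
    · obtain rfl | rfl := hab ⟨hw, hvw, hkw⟩ <;> simp
    · obtain rfl | rfl := hcd ⟨hw, hvw, hkw⟩ <;> simp
  calc Set.ncard {w ∈ S | DnAdj v w} ≤ Set.ncard {a, b, c, d} := Set.ncard_le_ncard hsub
    _ = Finset.card {a, b, c, d} := by rw [← Set.ncard_coe_finset]; simp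
    _ ≤ 4 := Finset.card_le_four

lemma MaximalTriangleFree.neighbours_eq_of_dnConj (hS : MaximalTriangleFree S) (hv : v ∈ S)
    (ha : a ∈ S) (hb : b ∈ S) (hva : DnAdj v a) (hvb : DnAdj v b) (hab : a ≠ b)
    (hba : ¬DnConj b a) (haa' : DnConj a a') (hbb' : DnConj b b') :
    {w ∈ S | DnAdj v w} = {a, b, a', b'} := by
  have hva' : DnAdj v a' := (haa'.dnAdj_of_dnAdj (hS.1 v hv) hva.symm).symm
  have hvb' : DnAdj v b' := (hbb'.dnAdj_of_dnAdj (hS.1 v hv) hvb.symm).symm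
  have hdisj : Disjoint (support a) (support b) := by
    by_contra h
    exact hba (dnConj_of_dotZ_eq_zero (hS.1 a ha) (hS.1 b hb)
      (hS.2.1.dotZ_eq_zero hv ha hb hva hvb hab) h).symm
  obtain ⟨i, j, hsupp⟩ := (hS.1 v hv).support_eq_pair
  have hmeet : ∀ {u}, DnAdj v u → ¬Disjoint {i, j} (support u) := fun h =>
    hsupp ▸ not_disjoint_support_of_dotZ_ne_zero h.2
  ext w
  refine ⟨fun ⟨hw, hvw⟩ => ?_, ?_⟩
  · by_cases hwa : a = w
    · exact .inl hwa.symm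
    by_cases hwb : b = w
    · exact .inr (.inl hwb.symm)
    rcases not_disjoint_or_of_not_disjoint_pair (hmeet hva) (hmeet hvb) (hmeet hvw) hdisj with h | h
    · exact .inr (.inr (.inl ((dnConj_of_dotZ_eq_zero (hS.1 a ha) (hS.1 w hw)
        (hS.2.1.dotZ_eq_zero hv ha hw hva hvw hwa) h).unique haa')))
    · exact .inr (.inr (.inr ((dnConj_of_dotZ_eq_zero (hS.1 b hb) (hS.1 w hw)
        (hS.2.1.dotZ_eq_zero hv hb hw hvb hvw hwb) h).unique hbb')))
  · rintro (rfl | rfl | rfl | rfl)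
    exacts [⟨ha, hva⟩, ⟨hb, hvb⟩, ⟨hS.mem_of_dnConj ha haa', hva'⟩,
      ⟨hS.mem_of_dnConj hb hbb', hvb'⟩]

lemma ncard_eq_four_of_dnConj (hab : a ≠ b) (hba : ¬DnConj b a) (haa' : DnConj a a')
    (hbb' : DnConj b b') : ({a, b, a', b'} : Set (Fin n → ℤ)).ncard = 4 := by
  have hab' : a ≠ b' := by rintro rfl; exact hba hbb'
  have ha'b : a' ≠ b := by rintro rfl; exact hba haa'.symm
  have ha'b' : a' ≠ b' := by rintro rfl; exact hab (haa'.symm.unique hbb'.symm)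
  rw [Set.ncard_insert_of_notMem (by simp [hab, haa'.ne, hab']),
    Set.ncard_insert_of_notMem (by simp [ha'b.symm, hbb'.ne]), Set.ncard_pair ha'b']

end TriangleFree

theorem maximal_triangle_free_degree_four_general
    {n : ℕ} (S : Set (Fin n → ℤ))
    (hS : MaximalTriangleFree S) :
    (∀ v ∈ S, Set.ncard {w ∈ S | DnAdj v w} ≤ 4) ∧
    (∀ v ∈ S, ∀ a ∈ S, ∀ b ∈ S, DnAdj v a → DnAdj v b → a ≠ b → ¬ DnConj b a →
      ∃ a' b', DnConj a a' ∧ DnConj b b' ∧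
        {w ∈ S | DnAdj v w} = {a, b, a', b'} ∧
        Set.ncard ({a, b, a', b'} : Set (Fin n → ℤ)) = 4) := by
  refine ⟨fun v hv => ncard_neighbours_le_four hS.1 hS.2.1 hv,
    fun v hv a ha b hb hva hvb hab hba => ?_⟩
  obtain ⟨a', haa'⟩ := (hS.1 a ha).exists_dnConj
  obtain ⟨b', hbb'⟩ := (hS.1 b hb).exists_dnConj
  exact ⟨a', b', haa', hbb', hS.neighbours_eq_of_dnConj hv ha hb hva hvb hab hba haa' hbb',
    ncard_eq_four_of_dnConj hab hba haa' hbb'⟩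

/-- In a maximal triangle-free subgraph `S` of `𝒟_n`, every vertex has
at most four neighbours in `S`; moreover if `v ∈ S` has two distinct neighbours
`a, b ∈ S` with `a ≠ b*`, then the neighbours of `v` in `S` are exactly
`a, b, a*, b*` (four of them). -/
theorem maximal_triangle_free_degree_four
    {n : ℕ} (hn : 2 ≤ n) (S : Set (Fin n → ℤ))
    (hS : MaximalTriangleFree S) :
    (∀ v ∈ S, Set.ncard {w ∈ S | DnAdj v w} ≤ 4) ∧
    (∀ v ∈ S, ∀ a ∈ S, ∀ b ∈ S, DnAdj v a → DnAdj v b → a ≠ b → ¬ DnConj b a →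
      ∃ a' b', DnConj a a' ∧ DnConj b b' ∧
        {w ∈ S | DnAdj v w} = {a, b, a', b'} ∧
        Set.ncard ({a, b, a', b'} : Set (Fin n → ℤ)) = 4) :=
  maximal_triangle_free_degree_four_general S hS
end

section
/- Let A be a cyclotomic charged signed graph containing two distinct adjacent charged vertices v and w whose charges have the same sign: A v w ≠ 0 and A v v = A w w ≠ 0. Then v and w have the same neighbours: for every vertex y with y ≠ v and y ≠ w, A y v ≠ 0 if and only if A y w ≠ 0. -/
open Matrix

/-!
Replacing `A` by `-A` if necessary, the common charge is `1`; let `ε = A v w = ±1`. As the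
spectrum of `A` lies in `[-2, 2]`, the matrix `M = 2I - A` is positive semidefinite. The vector
`x = e_v + ε e_w` has `xᵀ M x = M v v + 2 ε M v w + M w w = 1 - 2 + 1 = 0`, so `M x = 0`, and row
`y ∉ {v, w}` of this reads `A y v = -ε A y w`.
-/

namespace Matrix

variable {ι : Type*} [Fintype ι] [DecidableEq ι]

theorem IsHermitian.posSemidef_smul_one_sub {B : Matrix ι ι ℝ} (hB : B.IsHermitian) {r : ℝ}
    (h : ∀ μ ∈ spectrum ℝ B, μ ≤ r) : (r • 1 - B).PosSemidef := by
  refine posSemidef_iff_isHermitian_and_spectrum_nonneg.mpr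
    ⟨(isHermitian_one.smul (IsSelfAdjoint.all r)).sub hB, ?_⟩
  rw [← Algebra.algebraMap_eq_smul_one, ← spectrum.singleton_sub_eq]
  rintro _ ⟨_, rfl, μ, hμ, rfl⟩
  exact sub_nonneg.mpr (h μ hμ)

theorem PosSemidef.apply_add_mul_apply_eq_zero {M : Matrix ι ι ℝ} (hM : M.PosSemidef) {v w : ι}
    {s : ℝ} (hs : s * s = 1) (hvv : M v v = 1) (hww : M w w = 1) (hvw : M v w = -s) (y : ι) :
    M y v + s * M y w = 0 := by
  set x : ι → ℝ := Pi.single v 1 + s • Pi.single w 1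
  have hwv : M w v = -s := by rw [← hvw]; exact hM.isHermitian.apply v w
  have hx : star x ⬝ᵥ M *ᵥ x = 0 := by
    simp only [x, star_trivial, add_dotProduct, smul_dotProduct, single_dotProduct, mulVec_add,
      mulVec_smul, mulVec_single_one, Pi.add_apply, Pi.smul_apply, col_apply, smul_eq_mul, one_mul,
      hvv, hww, hvw, hwv]
    linear_combination (-1 : ℝ) * hs
  have hMx := congrFun ((hM.dotProduct_mulVec_zero_iff x).mp hx) y
  simpa [x, mulVec_add, mulVec_smul, mulVec_single_one] using hMx

end Matrix

theorem IsCyclo.neg {n : ℕ} {A : Matrix (Fin n) (Fin n) ℤ} (hA : IsCyclo A) : IsCyclo (-A) := by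
  intro μ hμ
  rw [Matrix.map_neg _ Int.cast_neg, ← spectrum.neg_eq] at hμ
  simpa using hA (-μ) hμ

theorem IsCyclo.apply_eq_zero_iff_of_charges_eq_one {n : ℕ} {A : Matrix (Fin n) (Fin n) ℤ}
    (hcyc : IsCyclo A) (hsymm : A.IsSymm) {v w : Fin n} (hvw : v ≠ w) (hv : A v v = 1)
    (hw : A w w = 1) (hε : A v w * A v w = 1) {y : Fin n} (hyv : y ≠ v) (hyw : y ≠ w) :
    A y v = 0 ↔ A y w = 0 := by
  set B : Matrix (Fin n) (Fin n) ℝ := A.map (↑)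
  have hM : ((2 : ℝ) • 1 - B).PosSemidef :=
    (isHermitian_iff_isSymm.mpr (hsymm.map _)).posSemidef_smul_one_sub fun μ hμ =>
      (le_abs_self μ).trans (hcyc μ hμ)
  have hrel := hM.apply_add_mul_apply_eq_zero (v := v) (w := w) (s := A v w)
    (by exact_mod_cast hε) (by simp [B, hv]; norm_num) (by simp [B, hw]; norm_num)
    (by simp [B, hvw]) y
  have hyv_eq : A y v = -(A v w * A y w) := by
    simp only [B, Matrix.sub_apply, Matrix.smul_apply, one_apply_ne hyv, one_apply_ne hyw,
      map_apply, smul_zero, zero_sub] at hrel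
    exact_mod_cast (by linarith : (A y v : ℝ) = -(A v w * A y w))
  rw [hyv_eq, neg_eq_zero, mul_eq_zero, or_iff_right (left_ne_zero_of_mul_eq_one hε)]

/-- In a cyclotomic charged signed graph, two adjacent charged
vertices whose charges have the same sign have the same neighbours. -/
theorem adjacent_like_charged_vertices_share_neighbours
    {n : ℕ} (A : Matrix (Fin n) (Fin n) ℤ) (hsymm : A.IsSymm)
    (hent : ∀ i j, A i j = -1 ∨ A i j = 0 ∨ A i j = 1)
    (hcyc : IsCyclo A)
    (v w : Fin n) (hvw : v ≠ w)
    (hadj : A v w ≠ 0)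
    (hch : A v v = A w w) (hch0 : A v v ≠ 0) :
    ∀ y : Fin n, y ≠ v → y ≠ w → (A y v ≠ 0 ↔ A y w ≠ 0) := by
  intro y hyv hyw
  have hadj_sq : A v w * A v w = 1 := by rcases hent v w with h | h | h <;> simp_all
  rcases hent v v with hc | hc | hc
  · simpa using (hcyc.neg.apply_eq_zero_iff_of_charges_eq_one hsymm.neg hvw (by simp [hc])
      (by simp [← hch, hc]) (by simpa using hadj_sq) hyv hyw).not
  · exact absurd hc hch0
  · exact (hcyc.apply_eq_zero_iff_of_charges_eq_one hsymm hvw hc (hch ▸ hc) hadj_sq hyv hyw).not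
end
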